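/- arXiv:2104.03711 — 2 statements merged into one kernel-verified Lean document; each statement's English description precedes it below -/
import Mathlib

section
/- Let v₁, v₂ ∈ ℝ² be linearly independent vectors and let L = {m·v₁ + n·v₂ : m, n ∈ ℤ} be the lattice they generate. For every lattice point p ∈ L and every integer k ≥ 1, the k-th order Voronoi region of p, R_k(p) = {x ∈ ℝ² : #{q ∈ L, q ≠ p : ‖x − q‖ < ‖x − p‖} = k − 1}, has Lebesgue measure equal to |det(v₁, v₂)| (the area of a fundamental domain of the lattice). In particular this measure is the same for every p ∈ L and every k ≥ 1. -/
/-!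
A point `x` off the countably many perpendicular bisectors of pairs of lattice points sees the
lattice points at pairwise distinct distances, so every `j : ℕ` is the number of lattice points
closer to `x` than `q` for exactly one lattice point `q`. Hence, up to a null set, the regions
`R_k(q)`, `q ∈ L`, partition the plane. As `R_k(p + g) = g + R_k(p)` for `g ∈ L`, the region
`R_k(p)` is a fundamental domain of the translation action of `L`, so it has the measure of any
other fundamental domain, such as the half-open parallelogram spanned by `v₁, v₂`.
-/

open MeasureTheory Set Metric Pointwise Submodule

section Ranking

variable {E : Type*} [NormedAddCommGroup E]

def closerPoints (L : Set E) (x p : E) : Set E := {q ∈ L | ‖x - q‖ < ‖x - p‖}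

/-- For `p ∈ L`, the `(j + 1)`-th order Voronoi region of `p`. -/
def orderRegion (L : Set E) (p : E) (j : ℕ) : Set E := {x | (closerPoints L x p).ncard = j}

theorem closerPoints_eq_sep_ne (L : Set E) (x p : E) :
    closerPoints L x p = {q ∈ L | q ≠ p ∧ ‖x - q‖ < ‖x - p‖} := by
  ext q
  exact and_congr_right fun _ => (and_iff_right_of_imp fun h hqp => (hqp ▸ h).false).symm

variable {L : Set E} {x p p' : E}

theorem closerPoints_finite (hfin : ∀ R : ℝ, (closedBall x R ∩ L).Finite) (p : E) :
    (closerPoints L x p).Finite :=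
  (hfin ‖x - p‖).subset fun _ hq => ⟨mem_closedBall_iff_norm'.2 hq.2.le, hq.1⟩

theorem exists_mem_norm_sub_gt_min (hinf : L.Infinite)
    (hfin : ∀ R : ℝ, (closedBall x R ∩ L).Finite) (r : ℝ) :
    ∃ p ∈ L, r < ‖x - p‖ ∧ ∀ q ∈ L, r < ‖x - q‖ → ‖x - p‖ ≤ ‖x - q‖ := by
  obtain ⟨q₀, hq₀L, hq₀⟩ : ∃ q₀ ∈ L, r < ‖x - q₀‖ := by
    by_contra! h
    exact hinf ((hfin r).subset fun q hq => ⟨mem_closedBall_iff_norm'.2 (h q hq), hq⟩)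
  have hS : {q ∈ L | r < ‖x - q‖ ∧ ‖x - q‖ ≤ ‖x - q₀‖}.Finite :=
    (hfin ‖x - q₀‖).subset fun _ hq => ⟨mem_closedBall_iff_norm'.2 hq.2.2, hq.1⟩
  obtain ⟨p, ⟨hpL, hp, hpq₀⟩, hmin⟩ :=
    exists_min_image _ (fun q => ‖x - q‖) hS ⟨q₀, hq₀L, hq₀, le_rfl⟩
  refine ⟨p, hpL, hp, fun q hqL hq => ?_⟩
  rcases le_or_gt ‖x - q‖ ‖x - q₀‖ with hqq₀ | hqq₀
  · exact hmin q ⟨hqL, hq, hqq₀⟩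
  · exact hpq₀.trans hqq₀.le

theorem exists_ncard_closerPoints_eq (hinf : L.Infinite)
    (hfin : ∀ R : ℝ, (closedBall x R ∩ L).Finite) (hinj : L.InjOn (‖x - ·‖)) (j : ℕ) :
    ∃ p ∈ L, (closerPoints L x p).ncard = j := by
  induction j with
  | zero =>
    obtain ⟨p, hpL, -, hmin⟩ := exists_mem_norm_sub_gt_min hinf hfin (-1)
    refine ⟨p, hpL, (ncard_eq_zero (closerPoints_finite hfin p)).2 ?_⟩
    refine eq_empty_of_forall_notMem fun q hq => (hq.2.trans_le ?_).false
    exact hmin q hq.1 (neg_one_lt_zero.trans_le (norm_nonneg _))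
  | succ j ih =>
    obtain ⟨p, hpL, rfl⟩ := ih
    obtain ⟨p', hp'L, hpp', hmin⟩ := exists_mem_norm_sub_gt_min hinf hfin ‖x - p‖
    have hnext : closerPoints L x p' = insert p (closerPoints L x p) := by
      ext q
      simp only [closerPoints, mem_insert_iff, mem_ofPred_eq]
      constructor
      · rintro ⟨hqL, hq⟩
        rcases (not_lt.1 fun h => (hmin q hqL h).not_gt hq).lt_or_eq with h | h
        · exact Or.inr ⟨hqL, h⟩
        · exact Or.inl (hinj hqL hpL h)
      · rintro (rfl | ⟨hqL, hq⟩)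
        exacts [⟨hpL, hpp'⟩, ⟨hqL, hq.trans hpp'⟩]
    refine ⟨p', hp'L, ?_⟩
    rw [hnext, ncard_insert_of_notMem (fun h => h.2.false) (closerPoints_finite hfin p)]

theorem ncard_closerPoints_lt (hfin : ∀ R : ℝ, (closedBall x R ∩ L).Finite) (hpL : p ∈ L)
    (h : ‖x - p‖ < ‖x - p'‖) :
    (closerPoints L x p).ncard < (closerPoints L x p').ncard :=
  ncard_lt_ncard ⟨fun _ hq => ⟨hq.1, hq.2.trans h⟩, fun hsub => (hsub ⟨hpL, h⟩).2.false⟩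
    (closerPoints_finite hfin p')

theorem eq_of_ncard_closerPoints_eq (hfin : ∀ R : ℝ, (closedBall x R ∩ L).Finite)
    (hinj : L.InjOn (‖x - ·‖)) (hpL : p ∈ L) (hp'L : p' ∈ L)
    (h : (closerPoints L x p).ncard = (closerPoints L x p').ncard) : p = p' := by
  rcases lt_trichotomy ‖x - p‖ ‖x - p'‖ with hlt | heq | hgt
  · exact absurd h (ncard_closerPoints_lt hfin hpL hlt).ne
  · exact hinj hpL hp'L heq
  · exact absurd h (ncard_closerPoints_lt hfin hp'L hgt).ne'

theorem closerPoints_vadd (g : E) (L : Set E) (x p : E) :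
    closerPoints (g +ᵥ L) (g +ᵥ x) (g +ᵥ p) = g +ᵥ closerPoints L x p := by
  ext q
  simp only [closerPoints, mem_vadd_set_iff_neg_vadd_mem, mem_ofPred_eq, vadd_eq_add]
  rw [show g + x - q = x - (-g + q) by abel, show g + x - (g + p) = x - p by abel]

theorem vadd_orderRegion (g : E) (L : Set E) (p : E) (j : ℕ) :
    g +ᵥ orderRegion L p j = orderRegion (g +ᵥ L) (g +ᵥ p) j := by
  ext x
  rw [mem_vadd_set_iff_neg_vadd_mem]
  simp only [orderRegion, mem_ofPred_eq]
  rw [← ncard_vadd_set g, ← closerPoints_vadd, vadd_neg_vadd]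

theorem vadd_orderRegion_of_mem {Λ : AddSubgroup E} {g : E} (hg : g ∈ Λ) (p : E) (j : ℕ) :
    g +ᵥ orderRegion Λ p j = orderRegion Λ (g + p) j := by
  rw [vadd_orderRegion, vadd_coe_set hg, vadd_eq_add]

end Ranking

section Measure

variable {E : Type*} [NormedAddCommGroup E] [MeasurableSpace E]

theorem measurableSet_orderRegion [OpensMeasurableSpace E] {L : Set E} (hL : L.Countable)
    (p : E) (j : ℕ) : MeasurableSet (orderRegion L p j) := by
  have := hL.to_subtype
  have hcloser : Measurable fun x : E => {q : L | ‖x - q‖ < ‖x - p‖} :=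
    measurable_set_iff.2 fun q => measurableSet_setOfPred.1 <| measurableSet_lt
      (by fun_prop : Continuous fun x : E => ‖x - q‖).measurable
      (by fun_prop : Continuous fun x : E => ‖x - p‖).measurable
  have hcard : ∀ x, (closerPoints L x p).ncard = {q : L | ‖x - q‖ < ‖x - p‖}.ncard := by
    intro x
    rw [← ncard_image_of_injective _ Subtype.val_injective]
    congr 1
    ext q
    simp [closerPoints, and_comm]
  have hpre :
      orderRegion L p j = (fun x => {q : L | ‖x - (q : E)‖ < ‖x - p‖}.ncard) ⁻¹' {j} := by
    ext x
    simp only [orderRegion, mem_ofPred_eq, mem_preimage, mem_singleton_iff, hcard]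
  rw [hpre]
  exact (measurable_ncard.comp hcloser) (measurableSet_singleton j)

variable [InnerProductSpace ℝ E] [FiniteDimensional ℝ E] [BorelSpace E]
  (μ : Measure E) [μ.IsAddHaarMeasure]

theorem measure_setOf_not_injOn_norm_sub {L : Set E} (hL : L.Countable) :
    μ {x | ¬L.InjOn (‖x - ·‖)} = 0 := by
  have hsub : {x | ¬L.InjOn (‖x - ·‖)} ⊆
      ⋃ q ∈ L, ⋃ q' ∈ L \ {q}, (AffineSubspace.perpBisector q q' : Set E) := by
    intro x hx
    simp only [InjOn, not_forall, mem_ofPred_eq] at hx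
    obtain ⟨q, hq, q', hq', heq, hne⟩ := hx
    simp only [mem_iUnion]
    refine ⟨q, hq, q', ⟨hq', Ne.symm hne⟩, ?_⟩
    rwa [SetLike.mem_coe, AffineSubspace.mem_perpBisector_iff_dist_eq', dist_eq_norm',
      dist_eq_norm']
  refine measure_mono_null hsub ((measure_biUnion_null_iff hL).2 fun q _ =>
    (measure_biUnion_null_iff (hL.mono sdiff_subset)).2 fun q' hq' => ?_)
  exact Measure.addHaar_affineSubspace μ _ fun h =>
    hq'.2 (AffineSubspace.perpBisector_eq_top.1 h).symm

theorem isAddFundamentalDomain_orderRegion {Λ : AddSubgroup E} [DiscreteTopology Λ]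
    [Infinite Λ] {p : E} (hp : p ∈ Λ) (j : ℕ) :
    IsAddFundamentalDomain Λ (orderRegion Λ p j) μ := by
  have hcount : (Λ : Set E).Countable := countable_coe_iff.1 countable_of_Lindelof_of_discrete
  have hfin (x : E) (R : ℝ) : (closedBall x R ∩ Λ).Finite :=
    finite_isBounded_inter_isClosed DiscreteTopology.isDiscrete isBounded_closedBall
      Λ.isClosed_of_discrete
  have hgen : ∀ᵐ x ∂μ, (Λ : Set E).InjOn (‖x - ·‖) :=
    ae_iff.2 (measure_setOf_not_injOn_norm_sub μ hcount)
  refine ⟨(measurableSet_orderRegion hcount p j).nullMeasurableSet, ?_, ?_⟩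
  · filter_upwards [hgen] with x hx
    obtain ⟨q, hq, hxq⟩ :=
      exists_ncard_closerPoints_eq (infinite_coe_iff.1 ‹_›) (hfin x) hx j
    refine ⟨⟨p - q, sub_mem hp hq⟩, ?_⟩
    have htrans := vadd_orderRegion_of_mem (sub_mem hp hq) q j
    rw [sub_add_cancel] at htrans
    exact htrans ▸ vadd_mem_vadd_set hxq
  · intro g h hgh
    change μ (((g : E) +ᵥ _) ∩ ((h : E) +ᵥ _)) = 0
    rw [vadd_orderRegion_of_mem g.2, vadd_orderRegion_of_mem h.2]
    refine measure_mono_null (fun x hx => show x ∈ {x | ¬(Λ : Set E).InjOn (‖x - ·‖)} from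
      fun hinj => hgh ?_) (measure_setOf_not_injOn_norm_sub μ hcount)
    exact Subtype.ext <| add_right_cancel <| eq_of_ncard_closerPoints_eq (hfin x) hinj
      (add_mem g.2 hp) (add_mem h.2 hp) (hx.1.trans hx.2.symm)

theorem measure_orderRegion_eq {Λ : AddSubgroup E} [DiscreteTopology Λ] [Infinite Λ] {D : Set E}
    (hD : IsAddFundamentalDomain Λ D μ) {p : E} (hp : p ∈ Λ) (j : ℕ) :
    μ (orderRegion Λ p j) = μ D :=
  have : Countable Λ := countable_of_Lindelof_of_discrete
  (isAddFundamentalDomain_orderRegion μ hp j).measure_eq hD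

end Measure

theorem volume_fundamentalDomain_eq_abs_det {ι F : Type*} [Fintype ι] [DecidableEq ι]
    [NormedAddCommGroup F] [InnerProductSpace ℝ F] [FiniteDimensional ℝ F] [MeasurableSpace F]
    [BorelSpace F] (b : Module.Basis ι ℝ F) (o : OrthonormalBasis ι ℝ F) :
    volume (ZSpan.fundamentalDomain b) = ENNReal.ofReal |o.toBasis.det b| := by
  rw [ZSpan.measure_fundamentalDomain b volume o.toBasis,
    measure_congr (ZSpan.fundamentalDomain_ae_parallelepiped _ volume), o.coe_toBasis,
    o.volume_parallelepiped, mul_one]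

theorem det_euclideanSpace_basisFun_fin_two (v₁ v₂ : EuclideanSpace ℝ (Fin 2)) :
    (EuclideanSpace.basisFun (Fin 2) ℝ).toBasis.det ![v₁, v₂] = v₁ 0 * v₂ 1 - v₁ 1 * v₂ 0 := by
  rw [Module.Basis.det_apply, Matrix.det_fin_two]
  simp [Module.Basis.toMatrix_apply]
  ring

theorem stmt_2_general (v₁ v₂ : EuclideanSpace ℝ (Fin 2))
    (hindep : LinearIndependent ℝ ![v₁, v₂])
    (L : Set (EuclideanSpace ℝ (Fin 2)))
    (hL : L = {q | ∃ m n : ℤ, q = m • v₁ + n • v₂})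
    (p : EuclideanSpace ℝ (Fin 2)) (hp : p ∈ L) (k : ℕ) :
    volume {x : EuclideanSpace ℝ (Fin 2) |
        {q ∈ L | q ≠ p ∧ ‖x - q‖ < ‖x - p‖}.ncard = k - 1}
      = ENNReal.ofReal |v₁ 0 * v₂ 1 - v₁ 1 * v₂ 0| := by
  have hcard : Fintype.card (Fin 2) = Module.finrank ℝ (EuclideanSpace ℝ (Fin 2)) := by simp
  set b := basisOfLinearIndependentOfCardEqFinrank hindep hcard
  have hb : ⇑b = ![v₁, v₂] := coe_basisOfLinearIndependentOfCardEqFinrank hindep hcard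
  have hLb : L = (span ℤ (range b)).toAddSubgroup := by
    rw [hL, hb, Matrix.range_cons_cons_empty]
    ext q
    simp [mem_span_pair, eq_comm]
  have : Infinite (span ℤ (range b)).toAddSubgroup :=
    (b.restrictScalars ℤ).repr.toEquiv.infinite_iff.mpr inferInstance
  have hregion : {x | {q ∈ L | q ≠ p ∧ ‖x - q‖ < ‖x - p‖}.ncard = k - 1} =
      orderRegion L p (k - 1) := by
    simp only [orderRegion, closerPoints_eq_sep_ne]
  rw [hLb] at hp
  rw [hregion, hLb,
    measure_orderRegion_eq volume (ZSpan.isAddFundamentalDomain' b volume) hp (k - 1),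
    volume_fundamentalDomain_eq_abs_det b (EuclideanSpace.basisFun (Fin 2) ℝ), hb,
    det_euclideanSpace_basisFun_fin_two]

/-- In the lattice generated by linearly independent `v₁, v₂ ∈ ℝ²`, the k-th order Voronoi
region of any lattice point `p` has Lebesgue measure `|det(v₁, v₂)|`, for every `k ≥ 1`. -/
theorem stmt_2 (v₁ v₂ : EuclideanSpace ℝ (Fin 2))
    (hindep : LinearIndependent ℝ ![v₁, v₂])
    (L : Set (EuclideanSpace ℝ (Fin 2)))
    (hL : L = {q | ∃ m n : ℤ, q = m • v₁ + n • v₂})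
    (p : EuclideanSpace ℝ (Fin 2)) (hp : p ∈ L) (k : ℕ) (hk : 1 ≤ k) :
    volume {x : EuclideanSpace ℝ (Fin 2) |
        {q ∈ L | q ≠ p ∧ ‖x - q‖ < ‖x - p‖}.ncard = k - 1}
      = ENNReal.ofReal |v₁ 0 * v₂ 1 - v₁ 1 * v₂ 0| :=
  stmt_2_general v₁ v₂ hindep L hL p hp k
end

section
/- Let λ_A > 0, λ_B > 0, let k ≥ 1 be an integer and set λ = λ_A/λ_B. The second moment of the compound Poisson–Erlang distribution equals ∑_{n=0}^∞ n² · (Γ(2k+n)/(n!·Γ(2k))) · (2λ_B)^{2k} λ_A^n / (2λ_B + λ_A)^{2k+n} = kλ·(1 + kλ + λ/2); consequently its variance equals kλ + kλ²/2. -/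
open Real Nat

/-!
Since `Γ(2k + n) / (n! Γ(2k)) = C(n + 2k - 1, n)`, the compound Poisson–Erlang law is the
negative binomial law with `2k` successes and odds `λ_A / (2λ_B) = λ/2`. Writing
`n² C(n + m, m)`, where `m = 2k - 1`, as
`(m + 1)(m + 2) C(n + m, m + 2) + (m + 1) C(n + m, m + 1)` and using
`∑ₙ C(n + m, m + j) tⁿ = tʲ / (1 - t)^(m + j + 1)`, its second moment is
`2k(2k + 1)(λ/2)² + 2k(λ/2)`.
-/

theorem sq_mul_choose_add (m n : ℕ) :
    n ^ 2 * (n + m).choose m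
      = (m + 1) * (m + 2) * (n + m).choose (m + 2) + (m + 1) * (n + m).choose (m + 1) := by
  have h1 := Nat.choose_succ_right_eq (n + m) m
  have h2 := Nat.choose_succ_right_eq (n + m) (m + 1)
  rw [Nat.add_sub_cancel] at h1
  rcases n with _ | n
  · simp [Nat.choose_eq_zero_of_lt]
  · rw [show n + 1 + m - (m + 1) = n by omega] at h2
    nlinarith [h1, h2]

section Geometric

variable {𝕜 : Type*} [NormedField 𝕜]

theorem hasSum_choose_add_mul_geometric (m j : ℕ) {t : 𝕜} (ht : ‖t‖ < 1) :
    HasSum (fun n : ℕ ↦ ((n + m).choose (m + j) : 𝕜) * t ^ n)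
      (t ^ j / (1 - t) ^ (m + j + 1)) := by
  have hinit : ∑ i ∈ Finset.range j, ((i + m).choose (m + j) : 𝕜) * t ^ i = 0 :=
    Finset.sum_eq_zero fun i hi ↦ by
      have hij := Finset.mem_range.mp hi
      rw [Nat.choose_eq_zero_of_lt (by omega), Nat.cast_zero, zero_mul]
  rw [← add_zero (_ / _), ← hinit, ← hasSum_nat_add_iff, div_eq_mul_one_div]
  refine ((hasSum_choose_mul_geometric_of_norm_lt_one (m + j) ht).mul_left (t ^ j)).congr_fun
    fun n ↦ ?_
  rw [show n + j + m = n + (m + j) by omega, pow_add]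
  ring

theorem hasSum_sq_mul_negBinomial (m : ℕ) {t : 𝕜} (ht : ‖t‖ < 1) :
    HasSum (fun n : ℕ ↦ (n : 𝕜) ^ 2 * ((n + m).choose m * (1 - t) ^ (m + 1) * t ^ n))
      ((m + 1) * (m + 2) * (t / (1 - t)) ^ 2 + (m + 1) * (t / (1 - t))) := by
  have h1t : 1 - t ≠ 0 := sub_ne_zero.mpr fun h ↦ by simp [← h] at ht
  have h := (((hasSum_choose_add_mul_geometric m 2 ht).mul_left (((m : 𝕜) + 1) * (m + 2))).add
    ((hasSum_choose_add_mul_geometric m 1 ht).mul_left ((m : 𝕜) + 1))).mul_left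
    ((1 - t) ^ (m + 1))
  rw [show (1 - t) ^ (m + 1) * ((m + 1) * (m + 2) * (t ^ 2 / (1 - t) ^ (m + 2 + 1))
      + (m + 1) * (t ^ 1 / (1 - t) ^ (m + 1 + 1)))
      = (m + 1) * (m + 2) * (t / (1 - t)) ^ 2 + (m + 1) * (t / (1 - t)) by
    field_simp; ring] at h
  refine h.congr_fun fun n ↦ ?_
  have hn : ((n ^ 2 * (n + m).choose m : ℕ) : 𝕜) = _ :=
    congrArg Nat.cast (sq_mul_choose_add m n)
  push_cast at hn
  linear_combination (1 - t) ^ (m + 1) * t ^ n * hn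

end Geometric

theorem Gamma_add_div_factorial_mul_Gamma (m n : ℕ) :
    Gamma ((m : ℝ) + 1 + n) / (n ! * Gamma (m + 1)) = (n + m).choose m := by
  rw [show (m : ℝ) + 1 + n = ((n + m : ℕ) : ℝ) + 1 by push_cast; ring, Gamma_nat_eq_factorial,
    Gamma_nat_eq_factorial, Nat.cast_choose ℝ (Nat.le_add_left m n), Nat.add_sub_cancel, mul_comm]

theorem hasSum_sq_mul_choose_mul_pow_div_add_pow (m : ℕ) {a b : ℝ} (ha : 0 ≤ a) (hb : 0 < b) :
    HasSum (fun n : ℕ ↦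
        (n : ℝ) ^ 2 * ((n + m).choose m * (b ^ (m + 1) * a ^ n / (b + a) ^ (m + 1 + n))))
      ((m + 1) * (m + 2) * (a / b) ^ 2 + (m + 1) * (a / b)) := by
  have hba : 0 < b + a := by linarith
  have ht : ‖a / (b + a)‖ < 1 := by
    rw [norm_of_nonneg (by positivity), div_lt_one hba]; linarith
  have h1t : 1 - a / (b + a) = b / (b + a) := by field_simp; ring
  have h := hasSum_sq_mul_negBinomial m ht
  rw [h1t, show a / (b + a) / (b / (b + a)) = a / b by field_simp] at h
  refine h.congr_fun fun n ↦ ?_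
  rw [div_pow, div_pow, pow_add (b + a)]
  field_simp

/-- The second moment of the compound Poisson–Erlang distribution equals
`kλ(1 + kλ + λ/2)` and its variance equals `kλ + kλ²/2`, where `λ = λ_A/λ_B`. -/
theorem stmt_9 (lamA lamB : ℝ) (hlamA : 0 < lamA) (hlamB : 0 < lamB)
    (k : ℕ) (hk : 1 ≤ k) (lam : ℝ) (hlam : lam = lamA / lamB) :
    (∑' n : ℕ, (n : ℝ) ^ 2 * (Real.Gamma (2 * k + n) / (n.factorial * Real.Gamma (2 * k)) *
        ((2 * lamB) ^ (2 * k) * lamA ^ n / (2 * lamB + lamA) ^ (2 * k + n)))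
      = k * lam * (1 + k * lam + lam / 2)) ∧
    (∑' n : ℕ, (n : ℝ) ^ 2 * (Real.Gamma (2 * k + n) / (n.factorial * Real.Gamma (2 * k)) *
        ((2 * lamB) ^ (2 * k) * lamA ^ n / (2 * lamB + lamA) ^ (2 * k + n)))
      - (k * lam) ^ 2 = k * lam + k * lam ^ 2 / 2) := by
  obtain ⟨m, hm⟩ : ∃ m, 2 * k = m + 1 := ⟨2 * k - 1, by omega⟩
  have hmR : 2 * (k : ℝ) = m + 1 := by exact_mod_cast hm
  have hsum := hasSum_sq_mul_choose_mul_pow_div_add_pow m hlamA.le (by positivity : 0 < 2 * lamB)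
  have hval : ((m : ℝ) + 1) * (m + 2) * (lamA / (2 * lamB)) ^ 2 + (m + 1) * (lamA / (2 * lamB))
      = k * lam * (1 + k * lam + lam / 2) := by
    rw [show (m : ℝ) = 2 * k - 1 by linarith, hlam]
    field_simp
    ring
  have hmoment : ∑' n : ℕ, (n : ℝ) ^ 2 * (Gamma (2 * k + n) / (n ! * Gamma (2 * k)) *
        ((2 * lamB) ^ (2 * k) * lamA ^ n / (2 * lamB + lamA) ^ (2 * k + n)))
      = k * lam * (1 + k * lam + lam / 2) := by
    simp_rw [hmR, hm, Gamma_add_div_factorial_mul_Gamma, hsum.tsum_eq, hval]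
  exact ⟨hmoment, by rw [hmoment]; ring⟩
end
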